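/- arXiv:1412.0543 — 3 statements merged into one kernel-verified Lean document; each statement's English description precedes it below -/
import Mathlib

section
/- Let A ⊂ ℝ be a compact interval and D ≥ 1. For every ε > 0 there exists δ > 0 such that for all class-D densities p and q on A, if ‖P − Q‖_BL < δ, where P and Q are the probability measures with Lebesgue densities p and q, then |ν(p) − ν(q)| < ε. In other words, the differential entropy ν is uniformly continuous on the set of class-D densities with respect to the bounded Lipschitz norm on the associated measures. -/
/-!
Write `φ t = t log t`. Pointwise `φ p - φ q = (1 + log q) (p - q) + B(p, q)`, where the
Bregman remainder satisfies `0 ≤ B(p, q) ≤ (p - q)² / q ≤ D (p - q)²`. For class-`D`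
densities both `1 + log q` and `p - q` are bounded and Lipschitz on `[a, b]` with constants
depending only on `D`, so after rescaling they are BL test functions, and both
`∫ (1 + log q) (p - q)` and `∫ (p - q)² = ∫ (p - q) (p - q)` are `O(‖P - Q‖_BL)`. Hence the
entropy is even Lipschitz: `|ν(p) - ν(q)| ≤ (1 + log D + 4 D²) ‖P - Q‖_BL`.
-/

open MeasureTheory Set

/-- A test function for the bounded Lipschitz norm on the interval `[a, b]`:
`g` satisfies `sup_{x ∈ [a,b]} |g(x)| + Lip(g) ≤ 1`, expressed via a sup-bound `c`
and a Lipschitz constant `L` on `[a,b]` with `c + L ≤ 1`. -/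
def IsBLTestOn (a b : ℝ) (g : ℝ → ℝ) : Prop :=
  ∃ c L : ℝ, 0 ≤ c ∧ 0 ≤ L ∧ c + L ≤ 1 ∧
    (∀ x ∈ Icc a b, |g x| ≤ c) ∧
    (∀ x ∈ Icc a b, ∀ y ∈ Icc a b, |g x - g y| ≤ L * |x - y|)

/-- The bounded Lipschitz norm `‖P - Q‖_BL` of the difference of the measures
`P`, `Q` on `[a,b]` with Lebesgue densities `p`, `q`. -/
noncomputable def blNormDiff (a b : ℝ) (p q : ℝ → ℝ) : ℝ :=
  sSup {r : ℝ | ∃ g : ℝ → ℝ, IsBLTestOn a b g ∧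
    r = |∫ x in Icc a b, g x * (p x - q x)|}

/-- `p` is a class-`D` density on `[a,b]`: `D⁻¹ ≤ p ≤ D` on `[a,b]`, `p` is
`D`-Lipschitz on `[a,b]`, and `∫_{[a,b]} p = 1`. -/
def IsClassDDensity (a b D : ℝ) (p : ℝ → ℝ) : Prop :=
  (∀ x ∈ Icc a b, D⁻¹ ≤ p x ∧ p x ≤ D) ∧
    (∀ x ∈ Icc a b, ∀ y ∈ Icc a b, |p x - p y| ≤ D * |x - y|) ∧
    (∫ x in Icc a b, p x) = 1

open Real

section BLNorm

variable {a b : ℝ} {p q g : ℝ → ℝ}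

lemma bddAbove_blNormDiff (hpq : IntegrableOn (fun x => p x - q x) (Icc a b)) :
    BddAbove {r : ℝ | ∃ g : ℝ → ℝ, IsBLTestOn a b g ∧
      r = |∫ x in Icc a b, g x * (p x - q x)|} := by
  refine ⟨∫ x in Icc a b, |p x - q x|, ?_⟩
  rintro r ⟨g, ⟨c, L, -, hL, hcL, hg, -⟩, rfl⟩
  refine MeasureTheory.norm_integral_le_of_norm_le (f := fun x => g x * (p x - q x))
    hpq.abs (ae_restrict_of_forall_mem measurableSet_Icc fun x hx => ?_)
  rw [Real.norm_eq_abs, abs_mul]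
  exact mul_le_of_le_one_left (abs_nonneg _) ((hg x hx).trans (by linarith))

lemma abs_integral_le_blNormDiff (hpq : IntegrableOn (fun x => p x - q x) (Icc a b))
    (hg : IsBLTestOn a b g) :
    |∫ x in Icc a b, g x * (p x - q x)| ≤ blNormDiff a b p q :=
  le_csSup (bddAbove_blNormDiff hpq) ⟨g, hg, rfl⟩

lemma abs_integral_le_mul_blNormDiff {c L : ℝ}
    (hpq : IntegrableOn (fun x => p x - q x) (Icc a b)) (hc : 0 < c) (hL : 0 ≤ L)
    (hbound : ∀ x ∈ Icc a b, |g x| ≤ c)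
    (hlip : ∀ x ∈ Icc a b, ∀ y ∈ Icc a b, |g x - g y| ≤ L * |x - y|) :
    |∫ x in Icc a b, g x * (p x - q x)| ≤ (c + L) * blNormDiff a b p q := by
  have hcL : 0 < c + L := by positivity
  have htest : IsBLTestOn a b fun x => g x / (c + L) := by
    refine ⟨c / (c + L), L / (c + L), by positivity, by positivity,
      by rw [← add_div, div_self hcL.ne'], fun x hx => ?_, fun x hx y hy => ?_⟩
    · rw [abs_div, abs_of_pos hcL]
      gcongr
      exact hbound x hx
    · rw [← sub_div, abs_div, abs_of_pos hcL, div_mul_eq_mul_div]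
      gcongr
      exact hlip x hx y hy
  calc |∫ x in Icc a b, g x * (p x - q x)|
      = |∫ x in Icc a b, (c + L) * (g x / (c + L) * (p x - q x))| := by
        congr 2 with x
        field_simp
    _ = (c + L) * |∫ x in Icc a b, g x / (c + L) * (p x - q x)| := by
        rw [integral_const_mul, abs_mul, abs_of_pos hcL]
    _ ≤ (c + L) * blNormDiff a b p q := by
        gcongr
        exact abs_integral_le_blNormDiff hpq htest

end BLNorm

section MulLog

noncomputable def bregmanMulLog (x y : ℝ) : ℝ :=
  x * log x - y * log y - (x - y) * (1 + log y)

lemma bregmanMulLog_eq {x y : ℝ} (hx : 0 < x) (hy : 0 < y) :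
    bregmanMulLog x y = x * log (x / y) - (x - y) := by
  rw [bregmanMulLog, log_div hx.ne' hy.ne']
  ring

lemma bregmanMulLog_nonneg {x y : ℝ} (hx : 0 < x) (hy : 0 < y) :
    0 ≤ bregmanMulLog x y := by
  have h := one_sub_inv_le_log_of_pos (div_pos hx hy)
  rw [inv_div] at h
  rw [bregmanMulLog_eq hx hy]
  have : x * (1 - y / x) = x - y := by field_simp
  nlinarith [mul_le_mul_of_nonneg_left h hx.le]

lemma bregmanMulLog_le {x y : ℝ} (hx : 0 < x) (hy : 0 < y) :
    bregmanMulLog x y ≤ (x - y) ^ 2 / y := by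
  have h := log_le_sub_one_of_pos (div_pos hx hy)
  have : x * (x / y - 1) - (x - y) = (x - y) ^ 2 / y := by field_simp
  rw [bregmanMulLog_eq hx hy, ← this]
  nlinarith [mul_le_mul_of_nonneg_left h hx.le]

lemma log_sub_log_le_mul_abs {c u v : ℝ} (hc : 0 < c) (hu : 0 < u) (hv : c⁻¹ ≤ v) :
    log u - log v ≤ c * |u - v| := by
  have hv0 : 0 < v := (inv_pos.mpr hc).trans_le hv
  calc log u - log v = log (u / v) := (log_div hu.ne' hv0.ne').symm
    _ ≤ u / v - 1 := log_le_sub_one_of_pos (div_pos hu hv0)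
    _ = (u - v) * v⁻¹ := by field_simp
    _ ≤ |u - v| * c := by
        gcongr
        · exact le_abs_self _
        · exact inv_le_of_inv_le₀ hc hv
    _ = c * |u - v| := mul_comm _ _

lemma abs_log_sub_log_le_mul_abs {c u v : ℝ} (hc : 0 < c) (hu : c⁻¹ ≤ u) (hv : c⁻¹ ≤ v) :
    |log u - log v| ≤ c * |u - v| := by
  have hu0 : 0 < u := (inv_pos.mpr hc).trans_le hu
  have hv0 : 0 < v := (inv_pos.mpr hc).trans_le hv
  rw [abs_sub_le_iff]
  exact ⟨log_sub_log_le_mul_abs hc hu0 hv,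
    abs_sub_comm u v ▸ log_sub_log_le_mul_abs hc hv0 hu⟩

end MulLog

namespace IsClassDDensity

variable {a b D : ℝ} {p q : ℝ → ℝ} {x : ℝ}

lemma pos (hp : IsClassDDensity a b D p) (hD : 0 < D) (hx : x ∈ Icc a b) : 0 < p x :=
  (inv_pos.mpr hD).trans_le (hp.1 x hx).1

lemma continuousOn (hp : IsClassDDensity a b D p) (hD : 0 ≤ D) :
    ContinuousOn p (Icc a b) := by
  refine (LipschitzOnWith.of_dist_le_mul (K := D.toNNReal) fun x hx y hy => ?_).continuousOn
  rw [Real.dist_eq, Real.dist_eq, Real.coe_toNNReal D hD]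
  exact hp.2.1 x hx y hy

lemma continuousOn_log (hp : IsClassDDensity a b D p) (hD : 0 < D) :
    ContinuousOn (fun x => log (p x)) (Icc a b) :=
  (hp.continuousOn hD.le).log fun _ hx => (hp.pos hD hx).ne'

lemma abs_log_le (hp : IsClassDDensity a b D p) (hD : 0 < D) (hx : x ∈ Icc a b) :
    |log (p x)| ≤ log D := by
  have hlower := log_le_log (inv_pos.mpr hD) (hp.1 x hx).1
  rw [log_inv] at hlower
  exact abs_le.mpr ⟨by linarith, log_le_log (hp.pos hD hx) (hp.1 x hx).2⟩

lemma integrableOn_sub (hp : IsClassDDensity a b D p) (hq : IsClassDDensity a b D q)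
    (hD : 0 ≤ D) : IntegrableOn (fun x => p x - q x) (Icc a b) :=
  ((hp.continuousOn hD).sub (hq.continuousOn hD)).integrableOn_Icc

lemma integrableOn_mul_log (hp : IsClassDDensity a b D p) (hD : 0 < D) :
    IntegrableOn (fun x => p x * log (p x)) (Icc a b) :=
  ((hp.continuousOn hD.le).mul (hp.continuousOn_log hD)).integrableOn_Icc

lemma integrableOn_bregmanMulLog (hp : IsClassDDensity a b D p)
    (hq : IsClassDDensity a b D q) (hD : 0 < D) :
    IntegrableOn (fun x => bregmanMulLog (p x) (q x)) (Icc a b) := by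
  have hpc := hp.continuousOn hD.le
  have hqc := hq.continuousOn hD.le
  have hlq := hq.continuousOn_log hD
  exact (((hpc.mul (hp.continuousOn_log hD)).sub (hqc.mul hlq)).sub
    ((hpc.sub hqc).mul (continuousOn_const.add hlq))).integrableOn_Icc

lemma abs_integral_one_add_log_mul_sub_le (hp : IsClassDDensity a b D p)
    (hq : IsClassDDensity a b D q) (hD : 1 ≤ D) :
    |∫ x in Icc a b, (1 + log (q x)) * (p x - q x)| ≤
      (1 + log D + D ^ 2) * blNormDiff a b p q := by
  have hD0 : 0 < D := by linarith
  have hlogD := log_nonneg hD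
  refine abs_integral_le_mul_blNormDiff (hp.integrableOn_sub hq hD0.le) (by positivity)
    (sq_nonneg D) (fun x hx => ?_) (fun x hx y hy => ?_)
  · exact (abs_add_le _ _).trans (by rw [abs_one]; linarith [hq.abs_log_le hD0 hx])
  · calc |1 + log (q x) - (1 + log (q y))| = |log (q x) - log (q y)| := by ring_nf
      _ ≤ D * |q x - q y| := abs_log_sub_log_le_mul_abs hD0 (hq.1 x hx).1 (hq.1 y hy).1
      _ ≤ D * (D * |x - y|) := by gcongr; exact hq.2.1 x hx y hy
      _ = D ^ 2 * |x - y| := by ring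

lemma integral_sq_sub_le (hp : IsClassDDensity a b D p) (hq : IsClassDDensity a b D q)
    (hD : 0 < D) :
    ∫ x in Icc a b, (p x - q x) ^ 2 ≤ 3 * D * blNormDiff a b p q := by
  have hbound : ∀ x ∈ Icc a b, |p x - q x| ≤ D := fun x hx => by
    have := inv_pos.mpr hD
    rw [abs_sub_le_iff]
    constructor <;> linarith [hp.1 x hx, hq.1 x hx]
  have hlip : ∀ x ∈ Icc a b, ∀ y ∈ Icc a b,
      |p x - q x - (p y - q y)| ≤ 2 * D * |x - y| := fun x hx y hy =>
    calc |p x - q x - (p y - q y)| = |(p x - p y) - (q x - q y)| := by ring_nf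
      _ ≤ |p x - p y| + |q x - q y| := abs_sub _ _
      _ ≤ D * |x - y| + D * |x - y| := add_le_add (hp.2.1 x hx y hy) (hq.2.1 x hx y hy)
      _ = 2 * D * |x - y| := by ring
  calc ∫ x in Icc a b, (p x - q x) ^ 2
      ≤ |∫ x in Icc a b, (p x - q x) * (p x - q x)| := by simp only [sq]; exact le_abs_self _
    _ ≤ (D + 2 * D) * blNormDiff a b p q :=
        abs_integral_le_mul_blNormDiff (hp.integrableOn_sub hq hD.le) hD (by positivity)
          hbound hlip
    _ = 3 * D * blNormDiff a b p q := by ring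

lemma integral_bregmanMulLog_le (hp : IsClassDDensity a b D p)
    (hq : IsClassDDensity a b D q) (hD : 0 < D) :
    ∫ x in Icc a b, bregmanMulLog (p x) (q x) ≤ 3 * D ^ 2 * blNormDiff a b p q := by
  have hpointwise : ∀ x ∈ Icc a b, bregmanMulLog (p x) (q x) ≤ D * (p x - q x) ^ 2 :=
    fun x hx => calc bregmanMulLog (p x) (q x)
        ≤ (p x - q x) ^ 2 / q x := bregmanMulLog_le (hp.pos hD hx) (hq.pos hD hx)
      _ = (q x)⁻¹ * (p x - q x) ^ 2 := by ring
      _ ≤ D * (p x - q x) ^ 2 := by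
          gcongr
          exact inv_le_of_inv_le₀ hD (hq.1 x hx).1
  have hsq : IntegrableOn (fun x => (p x - q x) ^ 2) (Icc a b) :=
    (((hp.continuousOn hD.le).sub (hq.continuousOn hD.le)).pow 2).integrableOn_Icc
  calc ∫ x in Icc a b, bregmanMulLog (p x) (q x)
      ≤ ∫ x in Icc a b, D * (p x - q x) ^ 2 :=
        setIntegral_mono_on (hp.integrableOn_bregmanMulLog hq hD) (hsq.const_mul D)
          measurableSet_Icc hpointwise
    _ = D * ∫ x in Icc a b, (p x - q x) ^ 2 := integral_const_mul D _
    _ ≤ D * (3 * D * blNormDiff a b p q) := by gcongr; exact hp.integral_sq_sub_le hq hD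
    _ = 3 * D ^ 2 * blNormDiff a b p q := by ring

lemma integral_mul_log_sub_integral_mul_log (hp : IsClassDDensity a b D p)
    (hq : IsClassDDensity a b D q) (hD : 0 < D) :
    (∫ x in Icc a b, p x * log (p x)) - ∫ x in Icc a b, q x * log (q x) =
      (∫ x in Icc a b, (1 + log (q x)) * (p x - q x)) +
        ∫ x in Icc a b, bregmanMulLog (p x) (q x) := by
  have hlin : IntegrableOn (fun x => (1 + log (q x)) * (p x - q x)) (Icc a b) :=
    ((continuousOn_const.add (hq.continuousOn_log hD)).mul
      ((hp.continuousOn hD.le).sub (hq.continuousOn hD.le))).integrableOn_Icc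
  rw [← integral_sub (hp.integrableOn_mul_log hD) (hq.integrableOn_mul_log hD),
    ← integral_add hlin (hp.integrableOn_bregmanMulLog hq hD)]
  congr 1 with x
  rw [bregmanMulLog]
  ring

theorem abs_integral_mul_log_sub_le (hp : IsClassDDensity a b D p)
    (hq : IsClassDDensity a b D q) (hD : 1 ≤ D) :
    |(∫ x in Icc a b, p x * log (p x)) - ∫ x in Icc a b, q x * log (q x)| ≤
      (1 + log D + 4 * D ^ 2) * blNormDiff a b p q := by
  have hD0 : 0 < D := by linarith
  have hremainder : 0 ≤ ∫ x in Icc a b, bregmanMulLog (p x) (q x) :=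
    setIntegral_nonneg measurableSet_Icc fun x hx =>
      bregmanMulLog_nonneg (hp.pos hD0 hx) (hq.pos hD0 hx)
  rw [hp.integral_mul_log_sub_integral_mul_log hq hD0]
  calc _ ≤ |∫ x in Icc a b, (1 + log (q x)) * (p x - q x)| +
        ∫ x in Icc a b, bregmanMulLog (p x) (q x) :=
        (abs_add_le _ _).trans_eq (by rw [abs_of_nonneg hremainder])
    _ ≤ (1 + log D + D ^ 2) * blNormDiff a b p q + 3 * D ^ 2 * blNormDiff a b p q :=
        add_le_add (hp.abs_integral_one_add_log_mul_sub_le hq hD)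
          (hp.integral_bregmanMulLog_le hq hD0)
    _ = (1 + log D + 4 * D ^ 2) * blNormDiff a b p q := by ring

end IsClassDDensity

/-- The differential entropy `ν(p) = -∫_{[a,b]} p log p` is uniformly continuous on the
set of class-`D` densities on the compact interval `[a,b]`, with respect to the bounded
Lipschitz norm on the associated probability measures. -/
theorem stmt_7 {a b D : ℝ} (hD : 1 ≤ D) :
    ∀ ε > 0, ∃ δ > 0, ∀ p q : ℝ → ℝ,
      IsClassDDensity a b D p → IsClassDDensity a b D q →
      blNormDiff a b p q < δ →
      |(-∫ x in Icc a b, p x * Real.log (p x)) -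
        (-∫ x in Icc a b, q x * Real.log (q x))| < ε := by
  intro ε hε
  have hM : 0 < 1 + log D + 4 * D ^ 2 := by have := log_nonneg hD; positivity
  refine ⟨ε / (1 + log D + 4 * D ^ 2), div_pos hε hM, fun p q hp hq hB => ?_⟩
  calc |(-∫ x in Icc a b, p x * log (p x)) - (-∫ x in Icc a b, q x * log (q x))|
      = |(∫ x in Icc a b, p x * log (p x)) - ∫ x in Icc a b, q x * log (q x)| := by
        rw [neg_sub_neg, abs_sub_comm]
    _ ≤ (1 + log D + 4 * D ^ 2) * blNormDiff a b p q := hp.abs_integral_mul_log_sub_le hq hD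
    _ < (1 + log D + 4 * D ^ 2) * (ε / (1 + log D + 4 * D ^ 2)) := by gcongr
    _ = ε := mul_div_cancel₀ ε hM.ne'
end

section
/- Let A^1, ..., A^N ⊂ ℝ be compact intervals, let u : ∏_{i=1}^N A^i → ℝ be bounded and continuous, let η > 0 and D ≥ 1. Let Δ_D be the set of N-tuples π = (π^1, ..., π^N) where each π^i is a Borel probability measure on A^i that is absolutely continuous with class-D density p^i. Then the function V_η(π) = −[ ∫ u d(π^1 ⊗ ⋯ ⊗ π^N) + η ∑_{i=1}^N ν(p^i) ] is continuous on Δ_D with respect to the metric d(π, π') = max_{i=1,...,N} ‖π^i − π'^i‖_BL. -/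
/-!
If `|p - q| ≥ ε` at `x₀`, then, both densities being `D`-Lipschitz, `p - q` stays `≥ ε/2` in
absolute value within distance `r = ε/(4D)` of `x₀`, and since `b - a ≥ 1/D` (from `∫ p = 1` and
`p ≤ D`) a piece of length `r/2` of that neighbourhood lies in `[a, b]`. The tent of height `r/2`
and half-width `r` at `x₀` is an admissible BL test function, whence
`‖p - q‖_BL ≥ ε³/(256 D²)`. So BL-closeness of class-`D` densities forces uniform closeness, and
on uniformly close densities with values in `[D⁻¹, D]` both terms of `V_η` move by `O(ε)`: the
integrand `u ∏ᵢ pⁱ(xᵢ)` because products of bounded factors are Lipschitz, the entropy because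
`x ↦ x log x` is Lipschitz on `[D⁻¹, D]`.
-/

open MeasureTheory Set

/-- The candidate Lyapunov function
`V_η(π) = -[∫ u d(π¹ ⊗ ⋯ ⊗ πᴺ) + η ∑ᵢ ν(pⁱ)]`, written in terms of the
densities `p i` of the strategies `π i` on the intervals `[lo i, hi i]`:
the product-measure integral is `∫_{∏ᵢ [lo i, hi i]} u(x) ∏ᵢ pⁱ(xᵢ) dx` and
`ν(pⁱ) = -∫ pⁱ log pⁱ` is the differential entropy. -/
noncomputable def lyapunovV {N : ℕ} (lo hi : Fin N → ℝ) (η : ℝ)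
    (u : (Fin N → ℝ) → ℝ) (p : Fin N → ℝ → ℝ) : ℝ :=
  -((∫ x in Set.pi univ fun i => Icc (lo i) (hi i), u x * ∏ i, p i (x i)) +
    η * ∑ i, -∫ y in Icc (lo i) (hi i), p i y * Real.log (p i y))

lemma continuousOn_of_abs_sub_le {s : Set ℝ} {f : ℝ → ℝ} {K : ℝ}
    (h : ∀ x ∈ s, ∀ y ∈ s, |f x - f y| ≤ K * |x - y|) : ContinuousOn f s := by
  refine (LipschitzOnWith.of_dist_le_mul (K := K.toNNReal) fun x hx y hy => ?_).continuousOn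
  rw [Real.dist_eq, Real.dist_eq, Real.coe_toNNReal']
  exact (h x hx y hy).trans (mul_le_mul_of_nonneg_right (le_max_left _ _) (abs_nonneg _))

lemma abs_setIntegral_sub_setIntegral_le {α : Type*} [MeasurableSpace α] {μ : Measure α}
    {s : Set α} {f g : α → ℝ} {C : ℝ} (hs : μ s < ⊤) (hf : IntegrableOn f s μ)
    (hg : IntegrableOn g s μ) (h : ∀ x ∈ s, |f x - g x| ≤ C) :
    |∫ x in s, f x ∂μ - ∫ x in s, g x ∂μ| ≤ C * μ.real s := by
  rw [← integral_sub hf hg]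
  exact norm_setIntegral_le_of_norm_le_const hs fun x hx => (Real.norm_eq_abs _).trans_le (h x hx)

lemma abs_prod_sub_prod_le {ι : Type*} (s : Finset ι) {f g : ι → ℝ} {C e : ℝ}
    (hf : ∀ i ∈ s, |f i| ≤ C) (hg : ∀ i ∈ s, |g i| ≤ C) (hfg : ∀ i ∈ s, |f i - g i| ≤ e) :
    |∏ i ∈ s, f i - ∏ i ∈ s, g i| ≤ s.card * C ^ (s.card - 1) * e := by
  induction s using Finset.cons_induction with
  | empty => simp
  | cons a s ha ih =>
    simp only [Finset.mem_cons, forall_eq_or_imp] at hf hg hfg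
    have hC : 0 ≤ C := (abs_nonneg _).trans hf.1
    have he : 0 ≤ e := (abs_nonneg _).trans hfg.1
    have hprod_g : |∏ i ∈ s, g i| ≤ C ^ s.card := by
      rw [Finset.abs_prod]
      exact (Finset.prod_le_prod (fun i _ => abs_nonneg _) hg.2).trans_eq (Finset.prod_const C)
    have hpow : C * (s.card * C ^ (s.card - 1)) = s.card * C ^ s.card := by
      rcases s.card with _ | n
      · simp
      · simp only [Nat.add_sub_cancel, pow_succ]; ring
    rw [Finset.prod_cons, Finset.prod_cons, Finset.card_cons, Nat.add_sub_cancel]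
    calc |f a * ∏ i ∈ s, f i - g a * ∏ i ∈ s, g i|
        = |f a * (∏ i ∈ s, f i - ∏ i ∈ s, g i) + (f a - g a) * ∏ i ∈ s, g i| := by
          congr 1; ring
      _ ≤ |f a| * |∏ i ∈ s, f i - ∏ i ∈ s, g i| + |f a - g a| * |∏ i ∈ s, g i| := by
        rw [← abs_mul, ← abs_mul]; exact abs_add_le _ _
      _ ≤ C * (s.card * C ^ (s.card - 1) * e) + e * C ^ s.card := by
        gcongr
        · exact hf.1
        · exact ih hf.2 hg.2 hfg.2
        · exact hfg.1
      _ = ((s.card + 1 : ℕ) : ℝ) * C ^ s.card * e := by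
        push_cast; linear_combination e * hpow

lemma abs_log_le_log_of_mem_Icc {D x : ℝ} (hD : 0 < D) (hx : x ∈ Icc D⁻¹ D) :
    |Real.log x| ≤ Real.log D := by
  have hx0 : 0 < x := (inv_pos.2 hD).trans_le hx.1
  rw [abs_le]
  constructor
  · simpa [Real.log_inv] using Real.log_le_log (inv_pos.2 hD) hx.1
  · exact Real.log_le_log hx0 hx.2

lemma abs_mul_log_sub_mul_log_le {D x y : ℝ} (hD : 0 < D) (hx : x ∈ Icc D⁻¹ D)
    (hy : y ∈ Icc D⁻¹ D) :
    |x * Real.log x - y * Real.log y| ≤ (Real.log D + 1) * |x - y| := by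
  have hpos : ∀ z ∈ Icc D⁻¹ D, 0 < z := fun z hz => (inv_pos.2 hD).trans_le hz.1
  refine (convex_Icc D⁻¹ D).norm_image_sub_le_of_norm_hasDerivWithin_le
    (fun z hz => (Real.hasDerivAt_mul_log (hpos z hz).ne').hasDerivWithinAt)
    (fun z hz => ?_) hy hx
  calc ‖Real.log z + 1‖ ≤ |Real.log z| + |1| := abs_add_le _ _
    _ ≤ Real.log D + 1 := by rw [abs_one]; gcongr; exact abs_log_le_log_of_mem_Icc hD hz

lemma abs_setIntegral_mul_prod_sub_le {ι : Type*} [Fintype ι] {lo hi : ι → ℝ}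
    {u : (ι → ℝ) → ℝ} {M C e : ℝ} {p q : ι → ℝ → ℝ}
    (hu : ContinuousOn u (Set.pi univ fun i => Icc (lo i) (hi i)))
    (hbd : ∀ x ∈ Set.pi univ fun i => Icc (lo i) (hi i), |u x| ≤ M)
    (hpc : ∀ i, ContinuousOn (p i) (Icc (lo i) (hi i)))
    (hqc : ∀ i, ContinuousOn (q i) (Icc (lo i) (hi i)))
    (hp : ∀ i, ∀ y ∈ Icc (lo i) (hi i), |p i y| ≤ C)
    (hq : ∀ i, ∀ y ∈ Icc (lo i) (hi i), |q i y| ≤ C)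
    (hpq : ∀ i, ∀ y ∈ Icc (lo i) (hi i), |p i y - q i y| ≤ e) :
    |(∫ x in Set.pi univ fun i => Icc (lo i) (hi i), u x * ∏ i, p i (x i)) -
        ∫ x in Set.pi univ fun i => Icc (lo i) (hi i), u x * ∏ i, q i (x i)| ≤
      M * (Fintype.card ι * C ^ (Fintype.card ι - 1) * e) *
        volume.real (Set.pi univ fun i => Icc (lo i) (hi i)) := by
  set box := Set.pi univ fun i => Icc (lo i) (hi i)
  have hbox : IsCompact box := isCompact_univ_pi fun i => isCompact_Icc
  have hint : ∀ f : ι → ℝ → ℝ, (∀ i, ContinuousOn (f i) (Icc (lo i) (hi i))) →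
      IntegrableOn (fun x => u x * ∏ i, f i (x i)) box := fun f hf =>
    (hu.mul (continuousOn_finsetProd _ fun i _ => (hf i).comp (continuous_apply i).continuousOn
      fun x hx => hx i (mem_univ i))).integrableOn_compact hbox
  refine abs_setIntegral_sub_setIntegral_le hbox.measure_lt_top (hint p hpc) (hint q hqc)
    fun x hx => ?_
  have hxi : ∀ i, x i ∈ Icc (lo i) (hi i) := fun i => hx i (mem_univ i)
  rw [← mul_sub, abs_mul]
  exact mul_le_mul (hbd x hx)
    (abs_prod_sub_prod_le Finset.univ (fun i _ => hp i _ (hxi i)) (fun i _ => hq i _ (hxi i))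
      fun i _ => hpq i _ (hxi i))
    (abs_nonneg _) ((abs_nonneg _).trans (hbd x hx))

lemma abs_setIntegral_mul_log_sub_le {a b D e : ℝ} {p q : ℝ → ℝ} (hD : 0 < D)
    (hpc : ContinuousOn p (Icc a b)) (hqc : ContinuousOn q (Icc a b))
    (hp : ∀ y ∈ Icc a b, p y ∈ Icc D⁻¹ D) (hq : ∀ y ∈ Icc a b, q y ∈ Icc D⁻¹ D)
    (hpq : ∀ y ∈ Icc a b, |p y - q y| ≤ e) :
    |(∫ y in Icc a b, p y * Real.log (p y)) - ∫ y in Icc a b, q y * Real.log (q y)| ≤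
      (Real.log D + 1) * e * volume.real (Icc a b) := by
  have hint : ∀ f : ℝ → ℝ, ContinuousOn f (Icc a b) → (∀ y ∈ Icc a b, f y ∈ Icc D⁻¹ D) →
      IntegrableOn (fun y => f y * Real.log (f y)) (Icc a b) := fun f hf hfD =>
    (hf.mul (hf.log fun y hy => ((inv_pos.2 hD).trans_le (hfD y hy).1).ne')).integrableOn_Icc
  refine abs_setIntegral_sub_setIntegral_le measure_Icc_lt_top (hint p hpc hp) (hint q hqc hq)
    fun y hy => ?_
  have hlogD : 0 ≤ Real.log D + 1 := by
    linarith [(abs_nonneg _).trans (abs_log_le_log_of_mem_Icc hD (hp y hy))]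
  exact (abs_mul_log_sub_mul_log_le hD (hp y hy) (hq y hy)).trans
    (mul_le_mul_of_nonneg_left (hpq y hy) hlogD)

lemma abs_lyapunovV_sub_le {N : ℕ} {lo hi : Fin N → ℝ} {η D M e : ℝ}
    {u : (Fin N → ℝ) → ℝ} {p q : Fin N → ℝ → ℝ} (hD : 0 < D)
    (hu : ContinuousOn u (Set.pi univ fun i => Icc (lo i) (hi i)))
    (hbd : ∀ x ∈ Set.pi univ fun i => Icc (lo i) (hi i), |u x| ≤ M)
    (hpc : ∀ i, ContinuousOn (p i) (Icc (lo i) (hi i)))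
    (hqc : ∀ i, ContinuousOn (q i) (Icc (lo i) (hi i)))
    (hp : ∀ i, ∀ y ∈ Icc (lo i) (hi i), p i y ∈ Icc D⁻¹ D)
    (hq : ∀ i, ∀ y ∈ Icc (lo i) (hi i), q i y ∈ Icc D⁻¹ D)
    (hpq : ∀ i, ∀ y ∈ Icc (lo i) (hi i), |p i y - q i y| ≤ e) :
    |lyapunovV lo hi η u p - lyapunovV lo hi η u q| ≤
      (M * (N * D ^ (N - 1)) *
          volume.real (Set.pi univ fun i => Icc (lo i) (hi i)) +
        |η| * (Real.log D + 1) * ∑ i, volume.real (Icc (lo i) (hi i))) * e := by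
  have habs : ∀ f : Fin N → ℝ → ℝ, (∀ i, ∀ y ∈ Icc (lo i) (hi i), f i y ∈ Icc D⁻¹ D) →
      ∀ i, ∀ y ∈ Icc (lo i) (hi i), |f i y| ≤ D := fun f hf i y hy =>
    abs_le.2 ⟨by linarith [inv_pos.2 hD, (hf i y hy).1], (hf i y hy).2⟩
  have hprod := abs_setIntegral_mul_prod_sub_le hu hbd hpc hqc (habs p hp) (habs q hq) hpq
  rw [Fintype.card_fin] at hprod
  have hentropy : ∀ i, |(∫ y in Icc (lo i) (hi i), p i y * Real.log (p i y)) -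
      ∫ y in Icc (lo i) (hi i), q i y * Real.log (q i y)| ≤
        (Real.log D + 1) * e * volume.real (Icc (lo i) (hi i)) := fun i =>
    abs_setIntegral_mul_log_sub_le hD (hpc i) (hqc i) (hp i) (hq i) (hpq i)
  have hsplit : lyapunovV lo hi η u p - lyapunovV lo hi η u q =
      -((∫ x in Set.pi univ fun i => Icc (lo i) (hi i), u x * ∏ i, p i (x i)) -
          ∫ x in Set.pi univ fun i => Icc (lo i) (hi i), u x * ∏ i, q i (x i)) +
        η * ∑ i, ((∫ y in Icc (lo i) (hi i), p i y * Real.log (p i y)) -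
          ∫ y in Icc (lo i) (hi i), q i y * Real.log (q i y)) := by
    simp only [lyapunovV, Finset.sum_neg_distrib, Finset.sum_sub_distrib]
    ring
  rw [hsplit]
  refine (abs_add_le _ _).trans ?_
  rw [abs_neg, abs_mul]
  calc _ ≤ M * (N * D ^ (N - 1) * e) *
          volume.real (Set.pi univ fun i => Icc (lo i) (hi i)) +
        |η| * ∑ i, (Real.log D + 1) * e * volume.real (Icc (lo i) (hi i)) := by
        gcongr ?_ + |η| * ?_
        exact (Finset.abs_sum_le_sum_abs _ _).trans (Finset.sum_le_sum fun i _ => hentropy i)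
    _ = _ := by rw [← Finset.mul_sum]; ring

lemma blNormDiff_comm (a b : ℝ) (p q : ℝ → ℝ) : blNormDiff a b p q = blNormDiff a b q p := by
  have hswap : ∀ g : ℝ → ℝ, |∫ x in Icc a b, g x * (q x - p x)| =
      |∫ x in Icc a b, g x * (p x - q x)| := fun g => by
    rw [← abs_neg, ← integral_neg]; simp only [mul_sub, neg_sub]
  simp only [blNormDiff, hswap]

lemma abs_setIntegral_le_blNormDiff {a b : ℝ} {p q g : ℝ → ℝ}
    (hp : ContinuousOn p (Icc a b)) (hq : ContinuousOn q (Icc a b)) (hg : IsBLTestOn a b g) :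
    |∫ x in Icc a b, g x * (p x - q x)| ≤ blNormDiff a b p q := by
  obtain ⟨C, hC⟩ := isCompact_Icc.exists_bound_of_continuousOn (hp.sub hq)
  refine le_csSup ⟨C * volume.real (Icc a b), ?_⟩ ⟨g, hg, rfl⟩
  rintro _ ⟨g', ⟨c, L, -, hL, hcL, hg'c, -⟩, rfl⟩
  have hbound : ∀ x ∈ Icc a b, ‖g' x * (p x - q x)‖ ≤ C := fun x hx => by
    rw [norm_mul, ← one_mul C]
    exact mul_le_mul ((hg'c x hx).trans (by linarith)) (hC x hx) (norm_nonneg _) zero_le_one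
  exact norm_setIntegral_le_of_norm_le_const measure_Icc_lt_top hbound

noncomputable def tent (x₀ r x : ℝ) : ℝ := max (1 - |x - x₀| / r) 0

section Tent

variable {x₀ r x y : ℝ}

lemma tent_nonneg : 0 ≤ tent x₀ r x := le_max_right _ _

lemma continuous_tent : Continuous (tent x₀ r) :=
  (continuous_const.sub ((continuous_id.sub continuous_const).abs.div_const r)).max continuous_const

lemma tent_le_one (hr : 0 < r) : tent x₀ r x ≤ 1 :=
  max_le (by linarith [div_nonneg (abs_nonneg (x - x₀)) hr.le]) zero_le_one

lemma tent_eq_zero (hr : 0 < r) (hx : r ≤ |x - x₀|) : tent x₀ r x = 0 :=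
  max_eq_right (by rw [sub_nonpos, le_div_iff₀ hr]; linarith)

lemma half_le_tent (hr : 0 < r) (hx : |x - x₀| ≤ r / 2) : 1 / 2 ≤ tent x₀ r x :=
  le_max_of_le_left <| by
    linarith [(div_le_iff₀ hr).2 (hx.trans_eq (by ring) : |x - x₀| ≤ 1 / 2 * r)]

lemma abs_tent_sub_tent_le (hr : 0 < r) : |tent x₀ r x - tent x₀ r y| ≤ |x - y| / r := by
  refine (abs_max_sub_max_le_abs _ _ _).trans ?_
  rw [sub_sub_sub_cancel_left, ← sub_div, abs_div, abs_of_pos hr]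
  refine div_le_div_of_nonneg_right ?_ hr.le
  simpa [abs_sub_comm y x] using abs_abs_sub_abs_le_abs_sub (y - x₀) (x - x₀)

lemma isBLTestOn_tent {a b : ℝ} (hr : 0 < r) (hr1 : r ≤ 1) :
    IsBLTestOn a b fun x => r / 2 * tent x₀ r x := by
  refine ⟨r / 2, 1 / 2, by positivity, by norm_num, by linarith, fun x _ => ?_, fun x _ y _ => ?_⟩
  · rw [abs_of_nonneg (mul_nonneg (by positivity) tent_nonneg)]
    exact mul_le_of_le_one_right (by positivity) (tent_le_one hr)
  · rw [← mul_sub, abs_mul, abs_of_pos (half_pos hr)]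
    calc r / 2 * |tent x₀ r x - tent x₀ r y| ≤ r / 2 * (|x - y| / r) := by
          gcongr; exact abs_tent_sub_tent_le hr
      _ = 1 / 2 * |x - y| := by field_simp

end Tent

lemma le_volume_real_Icc_inter_Icc {a b x₀ ρ : ℝ} (hx₀ : x₀ ∈ Icc a b) (hρ : 0 ≤ ρ)
    (hρb : ρ ≤ b - a) :
    ρ ≤ volume.real (Icc a b ∩ Icc (x₀ - ρ) (x₀ + ρ)) := by
  rw [Icc_inter_Icc, Real.volume_real_Icc]
  refine le_max_of_le_left ?_
  rcases max_cases a (x₀ - ρ) with ⟨h, -⟩ | ⟨h, -⟩ <;>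
    rcases min_cases b (x₀ + ρ) with ⟨h', -⟩ | ⟨h', -⟩ <;>
    · rw [h, h']; linarith [hx₀.1, hx₀.2]

lemma le_setIntegral_tent_mul {a b K ε r x₀ : ℝ} {f : ℝ → ℝ}
    (hf : ∀ x ∈ Icc a b, ∀ y ∈ Icc a b, |f x - f y| ≤ K * |x - y|)
    (hK : 0 ≤ K) (hx₀ : x₀ ∈ Icc a b) (hε : 0 < ε) (hfx₀ : ε ≤ f x₀) (hr : 0 < r)
    (hKr : K * r ≤ ε / 2) (hlen : r / 2 ≤ b - a) :
    ε * r / 8 ≤ ∫ x in Icc a b, tent x₀ r x * f x := by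
  have hf_half : ∀ x ∈ Icc a b, |x - x₀| ≤ r → ε / 2 ≤ f x := fun x hx hxr => by
    have h1 := (abs_sub_le_iff.1 (hf x hx x₀ hx₀)).2
    nlinarith [mul_le_mul_of_nonneg_left hxr hK]
  have hF_nonneg : ∀ x ∈ Icc a b, 0 ≤ tent x₀ r x * f x := fun x hx => by
    rcases le_or_gt |x - x₀| r with hxr | hxr
    · exact mul_nonneg tent_nonneg (by linarith [hf_half x hx hxr])
    · rw [tent_eq_zero hr hxr.le, zero_mul]
  set J := Icc a b ∩ Icc (x₀ - r / 2) (x₀ + r / 2)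
  have hF_J : ∀ x ∈ J, ε / 4 ≤ tent x₀ r x * f x := fun x hx => by
    have hxr : |x - x₀| ≤ r / 2 := abs_sub_le_iff.2 ⟨by linarith [hx.2.2], by linarith [hx.2.1]⟩
    calc ε / 4 = 1 / 2 * (ε / 2) := by ring
      _ ≤ tent x₀ r x * f x :=
        mul_le_mul (half_le_tent hr hxr) (hf_half x hx.1 (by linarith)) (by positivity)
          tent_nonneg
  have hint : IntegrableOn (fun x => tent x₀ r x * f x) (Icc a b) :=
    (continuous_tent.continuousOn.mul (continuousOn_of_abs_sub_le hf)).integrableOn_Icc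
  calc ε * r / 8 = ε / 4 * (r / 2) := by ring
    _ ≤ ε / 4 * volume.real J := by
      gcongr; exact le_volume_real_Icc_inter_Icc hx₀ (by positivity) hlen
    _ = ∫ _ in J, ε / 4 := by rw [setIntegral_const, smul_eq_mul, mul_comm]
    _ ≤ ∫ x in J, tent x₀ r x * f x :=
      setIntegral_mono_on
        (integrableOn_const ((measure_mono inter_subset_left).trans_lt measure_Icc_lt_top).ne)
        (hint.mono_set inter_subset_left) (measurableSet_Icc.inter measurableSet_Icc) hF_J
    _ ≤ ∫ x in Icc a b, tent x₀ r x * f x :=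
      setIntegral_mono_set hint ((ae_restrict_iff' measurableSet_Icc).2 (ae_of_all _ hF_nonneg))
        inter_subset_left.eventuallyLE

section ClassDDensity

variable {a b D ε : ℝ} {p q : ℝ → ℝ}

lemma IsClassDDensity.continuousOn_s8 (hp : IsClassDDensity a b D p) : ContinuousOn p (Icc a b) :=
  continuousOn_of_abs_sub_le hp.2.1

lemma IsClassDDensity.inv_le_sub (hD : 0 < D) (hp : IsClassDDensity a b D p) : D⁻¹ ≤ b - a := by
  have hbound : ∀ x ∈ Icc a b, ‖p x‖ ≤ D := fun x hx =>
    abs_le.2 ⟨by linarith [inv_pos.2 hD, (hp.1 x hx).1], (hp.1 x hx).2⟩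
  have h := norm_setIntegral_le_of_norm_le_const (μ := volume) measure_Icc_lt_top hbound
  rw [hp.2.2, norm_one, Real.volume_real_Icc] at h
  rcases le_total (b - a) 0 with hab | hab
  · rw [max_eq_right hab, mul_zero] at h; linarith
  · rw [max_eq_left hab] at h; rwa [inv_le_iff_one_le_mul₀' hD]

lemma IsClassDDensity.le_blNormDiff (hD : 0 < D) (hp : IsClassDDensity a b D p)
    (hq : IsClassDDensity a b D q) (hε : 0 < ε) (hε1 : ε ≤ 1) {x₀ : ℝ} (hx₀ : x₀ ∈ Icc a b)
    (hpq : ε ≤ p x₀ - q x₀) :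
    ε ^ 3 / (256 * D ^ 2) ≤ blNormDiff a b p q := by
  set r := ε / (4 * D)
  have hr : 0 < r := by positivity
  have hεD : ε < D := by linarith [(hq.1 x₀ hx₀).1, inv_pos.2 hD, (hp.1 x₀ hx₀).2]
  have hr1 : r ≤ 1 := by rw [div_le_one (by positivity)]; linarith
  have hlen : r / 2 ≤ b - a := by
    refine le_trans ?_ (hp.inv_le_sub hD)
    rw [div_div, div_le_iff₀ (by positivity), inv_mul_eq_div, le_div_iff₀ hD]; nlinarith
  have hlip : ∀ x ∈ Icc a b, ∀ y ∈ Icc a b,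
      |(p x - q x) - (p y - q y)| ≤ 2 * D * |x - y| := fun x hx y hy => by
    rw [sub_sub_sub_comm]
    linarith [abs_sub (p x - p y) (q x - q y), hp.2.1 x hx y hy, hq.2.1 x hx y hy]
  have htent := le_setIntegral_tent_mul hlip (by positivity) hx₀ hε hpq hr
    (le_of_eq (by simp only [r]; field_simp; ring)) hlen
  calc ε ^ 3 / (256 * D ^ 2) = r / 2 * (ε * r / 8) := by simp only [r]; field_simp; ring
    _ ≤ r / 2 * ∫ x in Icc a b, tent x₀ r x * (p x - q x) := by gcongr
    _ = ∫ x in Icc a b, r / 2 * tent x₀ r x * (p x - q x) := by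
      rw [← integral_const_mul]; simp only [mul_assoc]
    _ ≤ blNormDiff a b p q :=
      (le_abs_self _).trans (abs_setIntegral_le_blNormDiff hp.continuousOn_s8 hq.continuousOn_s8
        (isBLTestOn_tent hr hr1))

lemma IsClassDDensity.abs_sub_lt_of_blNormDiff_lt (hD : 0 < D) (hp : IsClassDDensity a b D p)
    (hq : IsClassDDensity a b D q) (hε : 0 < ε) (hε1 : ε ≤ 1)
    (hbl : blNormDiff a b p q < ε ^ 3 / (256 * D ^ 2)) :
    ∀ x ∈ Icc a b, |p x - q x| < ε := by
  intro x hx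
  by_contra! hle
  rcases le_abs'.1 hle with h | h
  · have := hq.le_blNormDiff hD hp hε hε1 hx (by linarith)
    rw [blNormDiff_comm] at this
    linarith
  · linarith [hp.le_blNormDiff hD hq hε hε1 hx h]

end ClassDDensity

theorem stmt_8_general {N : ℕ} (lo hi : Fin N → ℝ) (η D M : ℝ) (hD : 1 ≤ D)
    (u : (Fin N → ℝ) → ℝ)
    (hu : ContinuousOn u (Set.pi univ fun i => Icc (lo i) (hi i)))
    (hbd : ∀ x ∈ Set.pi univ fun i => Icc (lo i) (hi i), |u x| ≤ M) :
    ∀ p : Fin N → ℝ → ℝ, (∀ i, IsClassDDensity (lo i) (hi i) D (p i)) →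
      ∀ ε > 0, ∃ δ > 0, ∀ q : Fin N → ℝ → ℝ,
        (∀ i, IsClassDDensity (lo i) (hi i) D (q i)) →
        (∀ i, blNormDiff (lo i) (hi i) (p i) (q i) < δ) →
        |lyapunovV lo hi η u p - lyapunovV lo hi η u q| < ε := by
  intro p hp ε hε
  have hD0 : 0 < D := one_pos.trans_le hD
  set K := M * (N * D ^ (N - 1)) *
      volume.real (Set.pi univ fun i => Icc (lo i) (hi i)) +
    |η| * (Real.log D + 1) * ∑ i, volume.real (Icc (lo i) (hi i))
  set e := min 1 (ε / (|K| + 1))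
  have he : 0 < e := lt_min one_pos (by positivity)
  refine ⟨e ^ 3 / (256 * D ^ 2), by positivity, fun q hq hpq => ?_⟩
  have hsup : ∀ i, ∀ y ∈ Icc (lo i) (hi i), |p i y - q i y| ≤ e := fun i y hy =>
    ((hp i).abs_sub_lt_of_blNormDiff_lt hD0 (hq i) he (min_le_left _ _) (hpq i) y hy).le
  calc |lyapunovV lo hi η u p - lyapunovV lo hi η u q| ≤ K * e :=
        abs_lyapunovV_sub_le hD0 hu hbd (fun i => (hp i).continuousOn_s8)
          (fun i => (hq i).continuousOn_s8) (fun i => (hp i).1) (fun i => (hq i).1) hsup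
    _ ≤ |K| * (ε / (|K| + 1)) :=
        mul_le_mul (le_abs_self K) (min_le_right _ _) he.le (abs_nonneg K)
    _ < ε := by
        rw [mul_div_assoc', div_lt_iff₀ (by positivity)]
        nlinarith [abs_nonneg K]

/-- For compact intervals `A^i = [lo i, hi i]`, a bounded continuous `u` on the product
box, `η > 0` and `D ≥ 1`, the function `V_η` is continuous on the set `Δ_D` of tuples of
class-`D` densities, with respect to the metric
`d(π, π') = maxᵢ ‖πⁱ - π'ⁱ‖_BL` (stated in ε–δ form). -/
theorem stmt_8 {N : ℕ} (lo hi : Fin N → ℝ) (η D M : ℝ) (hη : 0 < η) (hD : 1 ≤ D)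
    (u : (Fin N → ℝ) → ℝ)
    (hu : ContinuousOn u (Set.pi univ fun i => Icc (lo i) (hi i)))
    (hbd : ∀ x ∈ Set.pi univ fun i => Icc (lo i) (hi i), |u x| ≤ M) :
    ∀ p : Fin N → ℝ → ℝ, (∀ i, IsClassDDensity (lo i) (hi i) D (p i)) →
      ∀ ε > 0, ∃ δ > 0, ∀ q : Fin N → ℝ → ℝ,
        (∀ i, IsClassDDensity (lo i) (hi i) D (q i)) →
        (∀ i, blNormDiff (lo i) (hi i) (p i) (q i) < δ) →
        |lyapunovV lo hi η u p - lyapunovV lo hi η u q| < ε :=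
  stmt_8_general lo hi η D M hD u hu hbd
end

section
/- Consider an N-player game in which each action set A^i = [a_i, b_i] ⊂ ℝ is a compact interval with a_i < b_i and each utility u^i : ∏_{j=1}^N A^j → ℝ satisfies |u^i| ≤ M and is such that for every a^{-i}, the map a^i ↦ u^i(a^i, a^{-i}) is Lipschitz with constant K. Fix η > 0. Suppose π = (π^1, ..., π^N) is a logit equilibrium: for every i, π^i is the Borel probability measure on A^i whose Lebesgue density is the logit density of U^i, where U^i(x) = ∫ u^i(x, a^{-i}) dπ^{-i}(a^{-i}) and π^{-i} = ⊗_{j≠i} π^j. Then each π^i is absolutely continuous with a density p^i satisfying e^{-2M/η}/(b_i − a_i) ≤ p^i(x) ≤ e^{2M/η}/(b_i − a_i) for all x ∈ A^i, and p^i is Lipschitz with constant (K/η)·e^{2M/η}/(b_i − a_i); in particular every logit equilibrium strategy is a nonatomic, absolutely continuous probability measure. -/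
/-!
Player `i`'s expected payoff `U(z) = ∫ u(z, a⁻ⁱ) dπ⁻ⁱ` averages `u(·, a⁻ⁱ)` over
profiles lying almost surely in the box `∏ A^j` (each `π^j` has a density on `A^j`), so it
inherits `|U| ≤ M` and the Lipschitz constant `K`. Then `exp (U / η)` takes values in
`[e^{-M/η}, e^{M/η}]`, its integral over `A^i` lies between `(b - a) e^{-M/η}` and
`(b - a) e^{M/η}`, and the ratio gives the bounds. Since `exp` is `e^{M/η}`-Lipschitz on
`(-∞, M/η]`, the numerator is `e^{M/η} K / η`-Lipschitz; dividing by the lower bound of the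
normaliser gives the Lipschitz constant of the density.
-/

open MeasureTheory Set

/-- The logit density with noise level `η` of a payoff function `u` on the
compact interval `A = [a, b]`:  `l(x) = exp(u(x)/η) / ∫_A exp(u(y)/η) dy`. -/
noncomputable def logitDensity (a b η : ℝ) (u : ℝ → ℝ) (x : ℝ) : ℝ :=
  Real.exp (u x / η) / ∫ y in Icc a b, Real.exp (u y / η)

namespace Real

theorem abs_exp_sub_exp_le {s t C : ℝ} (hs : s ≤ C) (ht : t ≤ C) :
    |exp s - exp t| ≤ exp C * |s - t| := by
  wlog h : t ≤ s generalizing s t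
  · rw [abs_sub_comm, abs_sub_comm s t]
    exact this ht hs (le_of_not_ge h)
  rw [abs_of_nonneg (sub_nonneg.mpr (exp_le_exp.mpr h)), abs_of_nonneg (sub_nonneg.mpr h)]
  have h_tangent : t - s + 1 ≤ exp (t - s) := add_one_le_exp _
  have h_split : exp t = exp s * exp (t - s) := by rw [← exp_add]; ring_nf
  have h_mono : exp s ≤ exp C := exp_le_exp.mpr hs
  nlinarith [exp_pos s, mul_nonneg (sub_nonneg.mpr h_mono) (sub_nonneg.mpr h)]

theorem exp_div_mem_Icc_of_abs_le {t M η : ℝ} (hη : 0 < η) (ht : |t| ≤ M) :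
    exp (t / η) ∈ Icc (exp (-M / η)) (exp (M / η)) := by
  obtain ⟨h_lo, h_hi⟩ := abs_le.mp ht
  exact ⟨exp_le_exp.mpr (by gcongr), exp_le_exp.mpr (by gcongr)⟩

end Real

theorem continuousOn_of_abs_sub_le_mul {f : ℝ → ℝ} {s : Set ℝ} {K : ℝ}
    (h : ∀ x ∈ s, ∀ y ∈ s, |f x - f y| ≤ K * |x - y|) : ContinuousOn f s :=
  (LipschitzOnWith.of_dist_le' (K := K) (by simpa only [Real.dist_eq] using h)).continuousOn

section LogitDensity

variable {a b η M K : ℝ} {u : ℝ → ℝ}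

theorem setIntegral_exp_div_mem_Icc (hab : a ≤ b) (hη : 0 < η) (hu : ContinuousOn u (Icc a b))
    (hM : ∀ x ∈ Icc a b, |u x| ≤ M) :
    ∫ y in Icc a b, Real.exp (u y / η) ∈
      Icc ((b - a) * Real.exp (-M / η)) ((b - a) * Real.exp (M / η)) := by
  have hvol : volume.real (Icc a b) = b - a := Real.volume_real_Icc_of_le hab
  have hexp := fun x hx => Real.exp_div_mem_Icc_of_abs_le hη (hM x hx)
  constructor
  · have hint : IntegrableOn (fun y => Real.exp (u y / η)) (Icc a b) :=
      (Real.continuous_exp.comp_continuousOn (hu.div_const η)).integrableOn_compact isCompact_Icc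
    have := setIntegral_ge_of_const_le_real measurableSet_Icc measure_Icc_lt_top.ne
      (fun x hx => (hexp x hx).1) hint
    rwa [hvol, mul_comm] at this
  · calc ∫ y in Icc a b, Real.exp (u y / η)
        ≤ ‖∫ y in Icc a b, Real.exp (u y / η)‖ := Real.le_norm_self _
      _ ≤ Real.exp (M / η) * volume.real (Icc a b) :=
          norm_setIntegral_le_of_norm_le_const measure_Icc_lt_top fun x hx => by
            rw [Real.norm_of_nonneg (Real.exp_pos _).le]
            exact (hexp x hx).2
      _ = (b - a) * Real.exp (M / η) := by rw [hvol, mul_comm]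

theorem logitDensity_mem_Icc (hab : a < b) (hη : 0 < η) (hu : ContinuousOn u (Icc a b))
    (hM : ∀ x ∈ Icc a b, |u x| ≤ M) {x : ℝ} (hx : x ∈ Icc a b) :
    logitDensity a b η u x ∈
      Icc (Real.exp (-(2 * M) / η) / (b - a)) (Real.exp (2 * M / η) / (b - a)) := by
  obtain ⟨hnum_lo, hnum_hi⟩ := Real.exp_div_mem_Icc_of_abs_le hη (hM x hx)
  obtain ⟨hden_lo, hden_hi⟩ := setIntegral_exp_div_mem_Icc hab.le hη hu hM
  have hden_pos : 0 < (b - a) * Real.exp (-M / η) := mul_pos (sub_pos.mpr hab) (Real.exp_pos _)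
  have hexp_neg : Real.exp (-(2 * M) / η) = Real.exp (-M / η) / Real.exp (M / η) := by
    rw [← Real.exp_sub]; ring_nf
  have hexp_pos : Real.exp (2 * M / η) = Real.exp (M / η) / Real.exp (-M / η) := by
    rw [← Real.exp_sub]; ring_nf
  constructor
  · calc Real.exp (-(2 * M) / η) / (b - a)
        = Real.exp (-M / η) / ((b - a) * Real.exp (M / η)) := by
          rw [hexp_neg, div_div, mul_comm]
      _ ≤ logitDensity a b η u x :=
          div_le_div₀ (Real.exp_pos _).le hnum_lo (hden_pos.trans_le hden_lo) hden_hi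
  · calc logitDensity a b η u x
        ≤ Real.exp (M / η) / ((b - a) * Real.exp (-M / η)) :=
          div_le_div₀ (Real.exp_pos _).le hnum_hi hden_pos hden_lo
      _ = Real.exp (2 * M / η) / (b - a) := by rw [hexp_pos, div_div, mul_comm]

theorem abs_logitDensity_sub_le (hab : a < b) (hη : 0 < η) (hM : ∀ x ∈ Icc a b, |u x| ≤ M)
    (hK : ∀ x ∈ Icc a b, ∀ y ∈ Icc a b, |u x - u y| ≤ K * |x - y|)
    {x y : ℝ} (hx : x ∈ Icc a b) (hy : y ∈ Icc a b) :
    |logitDensity a b η u x - logitDensity a b η u y| ≤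
      K / η * Real.exp (2 * M / η) / (b - a) * |x - y| := by
  have hden_lo :=
    (setIntegral_exp_div_mem_Icc hab.le hη (continuousOn_of_abs_sub_le_mul hK) hM).1
  have hden_pos : 0 < (b - a) * Real.exp (-M / η) :=
    mul_pos (sub_pos.mpr hab) (Real.exp_pos _)
  have hu_div_le : ∀ z ∈ Icc a b, u z / η ≤ M / η := fun z hz =>
    div_le_div_of_nonneg_right (abs_le.mp (hM z hz)).2 hη.le
  have hnum :
      |Real.exp (u x / η) - Real.exp (u y / η)| ≤ Real.exp (M / η) * (K * |x - y| / η) :=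
    calc |Real.exp (u x / η) - Real.exp (u y / η)|
        ≤ Real.exp (M / η) * |u x / η - u y / η| :=
          Real.abs_exp_sub_exp_le (hu_div_le x hx) (hu_div_le y hy)
      _ = Real.exp (M / η) * (|u x - u y| / η) := by
          rw [div_sub_div_same, abs_div, abs_of_pos hη]
      _ ≤ Real.exp (M / η) * (K * |x - y| / η) := by gcongr; exact hK x hx y hy
  rw [logitDensity, logitDensity, div_sub_div_same, abs_div,
    abs_of_pos (hden_pos.trans_le hden_lo)]
  calc |Real.exp (u x / η) - Real.exp (u y / η)| / ∫ y in Icc a b, Real.exp (u y / η)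
      ≤ Real.exp (M / η) * (K * |x - y| / η) / ((b - a) * Real.exp (-M / η)) :=
        div_le_div₀ (le_trans (abs_nonneg _) hnum) hnum hden_pos hden_lo
    _ = K / η * Real.exp (2 * M / η) / (b - a) * |x - y| := by
        rw [show Real.exp (2 * M / η) = Real.exp (M / η) / Real.exp (-M / η) by
          rw [← Real.exp_sub]; ring_nf]
        field_simp

end LogitDensity

section ExpectedPayoff

variable {ι : Type*} [DecidableEq ι] {μ : Measure (ι → ℝ)} [IsProbabilityMeasure μ]
  {A : ι → Set ℝ} {f : (ι → ℝ) → ℝ} {M K : ℝ} {i : ι}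

theorem update_mem_of_forall_mem {c : ι → ℝ} (hc : ∀ j, c j ∈ A j) {z : ℝ} (hz : z ∈ A i) :
    ∀ j, Function.update c i z j ∈ A j :=
  (Function.forall_update_iff c fun j x => x ∈ A j).mpr ⟨hz, fun j _ => hc j⟩

theorem abs_integral_update_le (hμ : ∀ᵐ c ∂μ, ∀ j, c j ∈ A j)
    (hf : ∀ c, (∀ j, c j ∈ A j) → |f c| ≤ M) {z : ℝ} (hz : z ∈ A i) :
    |∫ c, f (Function.update c i z) ∂μ| ≤ M := by
  simpa using norm_integral_le_of_norm_le_const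
    (f := fun c => f (Function.update c i z)) (μ := μ)
    (hμ.mono fun c hc =>
      (Real.norm_eq_abs _).trans_le (hf _ (update_mem_of_forall_mem hc hz)))

theorem abs_integral_update_sub_le (hfm : Measurable f) (hμ : ∀ᵐ c ∂μ, ∀ j, c j ∈ A j)
    (hf : ∀ c, (∀ j, c j ∈ A j) → |f c| ≤ M)
    (hK : ∀ c, (∀ j, c j ∈ A j) → ∀ x ∈ A i, ∀ y ∈ A i,
      |f (Function.update c i x) - f (Function.update c i y)| ≤ K * |x - y|)
    {x y : ℝ} (hx : x ∈ A i) (hy : y ∈ A i) :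
    |∫ c, f (Function.update c i x) ∂μ - ∫ c, f (Function.update c i y) ∂μ| ≤
      K * |x - y| := by
  have hint : ∀ z ∈ A i, Integrable (fun c => f (Function.update c i z)) μ :=
    fun z hz => .of_bound (hfm.comp measurable_update_left).aestronglyMeasurable M
      (hμ.mono fun c hc => hf _ (update_mem_of_forall_mem hc hz))
  rw [← integral_sub (hint x hx) (hint y hy)]
  simpa using norm_integral_le_of_norm_le_const
    (f := fun c => f (Function.update c i x) - f (Function.update c i y)) (μ := μ)
    (hμ.mono fun c hc => (Real.norm_eq_abs _).trans_le (hK c hc x hx y hy))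

end ExpectedPayoff

theorem stmt_19_general {N : ℕ} (lo hi : Fin N → ℝ) (hab : ∀ i, lo i < hi i)
    (u : Fin N → (Fin N → ℝ) → ℝ) (M K η : ℝ) (hη : 0 < η)
    (humeas : ∀ i, Measurable (u i))
    (hbd : ∀ i, ∀ c : Fin N → ℝ, (∀ j, c j ∈ Icc (lo j) (hi j)) → |u i c| ≤ M)
    (hlip : ∀ i, ∀ c : Fin N → ℝ, (∀ j, c j ∈ Icc (lo j) (hi j)) →
      ∀ x ∈ Icc (lo i) (hi i), ∀ y ∈ Icc (lo i) (hi i),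
        |u i (Function.update c i x) - u i (Function.update c i y)| ≤ K * |x - y|)
    (π : Fin N → Measure ℝ) [∀ i, IsProbabilityMeasure (π i)]
    (heq : ∀ i, π i =
      (volume.restrict (Icc (lo i) (hi i))).withDensity fun x =>
        ENNReal.ofReal
          (logitDensity (lo i) (hi i) η
            (fun z => ∫ c, u i (Function.update c i z) ∂(Measure.pi π)) x)) :
    ∀ i, ∃ p : ℝ → ℝ,
      (π i = (volume.restrict (Icc (lo i) (hi i))).withDensity fun x =>
        ENNReal.ofReal (p x)) ∧
      (∀ x ∈ Icc (lo i) (hi i),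
        Real.exp (-(2 * M) / η) / (hi i - lo i) ≤ p x ∧
          p x ≤ Real.exp (2 * M / η) / (hi i - lo i)) ∧
      (∀ x ∈ Icc (lo i) (hi i), ∀ y ∈ Icc (lo i) (hi i),
        |p x - p y| ≤ K / η * Real.exp (2 * M / η) / (hi i - lo i) * |x - y|) ∧
      π i ≪ volume ∧ ∀ x : ℝ, π i {x} = 0 := by
  intro i
  have hsupp : ∀ j, ∀ᵐ x ∂π j, x ∈ Icc (lo j) (hi j) := fun j => by
    rw [heq j]
    exact (withDensity_absolutelyContinuous _ _).ae_le (ae_restrict_mem measurableSet_Icc)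
  have hbox : ∀ᵐ c ∂Measure.pi π, ∀ j, c j ∈ Icc (lo j) (hi j) :=
    Filter.eventually_all.2 fun j => Measure.tendsto_eval_ae_ae.eventually (hsupp j)
  have hUbd := fun z (hz : z ∈ Icc (lo i) (hi i)) => abs_integral_update_le hbox (hbd i) hz
  have hUlip := fun x (hx : x ∈ Icc (lo i) (hi i)) y (hy : y ∈ Icc (lo i) (hi i)) =>
    abs_integral_update_sub_le (humeas i) hbox (hbd i) (hlip i) hx hy
  have hac : π i ≪ volume := by
    rw [heq i]
    exact (withDensity_absolutelyContinuous _ _).trans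
      Measure.restrict_le_self.absolutelyContinuous
  exact ⟨_, heq i,
    fun x hx => logitDensity_mem_Icc (hab i) hη (continuousOn_of_abs_sub_le_mul hUlip) hUbd hx,
    fun x hx y hy => abs_logitDensity_sub_le (hab i) hη hUbd hUlip hx hy,
    hac, fun x => hac (measure_singleton x)⟩

/-- In an `N`-player game with compact interval action sets `A^i = [lo i, hi i]`
(`lo i < hi i`), utilities bounded by `M` and `K`-Lipschitz in a player's own action,
every strategy `π^i` of a logit equilibrium `π = (π^1, …, π^N)` with noise level
`η > 0` (i.e. each `π^i` has Lebesgue density on `A^i` equal to the logit density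
of `U^i(x) = ∫ u^i(x, a^{-i}) dπ^{-i}(a^{-i})`, the i-th coordinate of the product
measure being overwritten via `Function.update`) is absolutely continuous with a
density `p^i` satisfying `e^{-2M/η}/(hi i - lo i) ≤ p^i ≤ e^{2M/η}/(hi i - lo i)`
on `A^i` and Lipschitz there with constant `(K/η)·e^{2M/η}/(hi i - lo i)`; in
particular every logit equilibrium strategy is a nonatomic, absolutely continuous
probability measure. -/
theorem stmt_19 {N : ℕ} (lo hi : Fin N → ℝ) (hab : ∀ i, lo i < hi i)
    (u : Fin N → (Fin N → ℝ) → ℝ) (M K η : ℝ) (hη : 0 < η)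
    (humeas : ∀ i, Measurable (u i))
    (hbd : ∀ i, ∀ c : Fin N → ℝ, (∀ j, c j ∈ Icc (lo j) (hi j)) → |u i c| ≤ M)
    (hlip : ∀ i, ∀ c : Fin N → ℝ, (∀ j, c j ∈ Icc (lo j) (hi j)) →
      ∀ x ∈ Icc (lo i) (hi i), ∀ y ∈ Icc (lo i) (hi i),
        |u i (Function.update c i x) - u i (Function.update c i y)| ≤ K * |x - y|)
    (π : Fin N → Measure ℝ) [∀ i, IsProbabilityMeasure (π i)]
    (hsupp : ∀ i, π i (Icc (lo i) (hi i)) = 1)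
    (heq : ∀ i, π i =
      (volume.restrict (Icc (lo i) (hi i))).withDensity fun x =>
        ENNReal.ofReal
          (logitDensity (lo i) (hi i) η
            (fun z => ∫ c, u i (Function.update c i z) ∂(Measure.pi π)) x)) :
    ∀ i, ∃ p : ℝ → ℝ,
      (π i = (volume.restrict (Icc (lo i) (hi i))).withDensity fun x =>
        ENNReal.ofReal (p x)) ∧
      (∀ x ∈ Icc (lo i) (hi i),
        Real.exp (-(2 * M) / η) / (hi i - lo i) ≤ p x ∧
          p x ≤ Real.exp (2 * M / η) / (hi i - lo i)) ∧
      (∀ x ∈ Icc (lo i) (hi i), ∀ y ∈ Icc (lo i) (hi i),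
        |p x - p y| ≤ K / η * Real.exp (2 * M / η) / (hi i - lo i) * |x - y|) ∧
      π i ≪ volume ∧ ∀ x : ℝ, π i {x} = 0 :=
  stmt_19_general lo hi hab u M K η hη humeas hbd hlip π heq
end
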